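/- arXiv:math/0110210 — 2 statements merged into one kernel-verified Lean document; each statement's English description precedes it below -/
import Mathlib

section
/- Let G be a finitely generated group, H₁,…,Hₙ finitely generated subgroups, Xᵢ a nontrivial Hᵢ-almost invariant subset of G for each i, and suppose the family X₁,…,Xₙ is in good position, with the induced relation ≤ on E. If U, V, Z ∈ E satisfy U ≤ V, Z crosses U, and Z does not cross V, then Z ≤ V or Z* ≤ V; if moreover U < V, then Z < V or Z* < V. -/
section Defs

variable {G : Type*} [Group G]

/-- `W` is `H`-finite: contained in finitely many left cosets `Hg` of `H` in `G`. -/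
def HFinite (H : Subgroup G) (W : Set G) : Prop :=
  ∃ F : Finset G, W ⊆ ⋃ g ∈ F, (· * g) '' (H : Set G)

/-- The left translate `gX` of a subset `X` of `G`. -/
def leftTr (g : G) (X : Set G) : Set G := (g * ·) '' X

/-- `X` is an `H`-almost invariant subset of `G`: `HX = X` and for every `g` the
symmetric difference of `X` and `Xg` is `H`-finite. -/
def AlmostInv (H : Subgroup G) (X : Set G) : Prop :=
  (∀ h ∈ H, leftTr h X = X) ∧ ∀ g : G, HFinite H (symmDiff X ((· * g) '' X))

/-- `X` is a nontrivial `H`-almost invariant subset of `G`. -/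
def NontrivialAI (H : Subgroup G) (X : Set G) : Prop :=
  AlmostInv H X ∧ ¬ HFinite H X ∧ ¬ HFinite H Xᶜ

/-- `Y` crosses the `H`-almost invariant set `X`: none of the four corner sets is `H`-finite. -/
def Crosses (H : Subgroup G) (X Y : Set G) : Prop :=
  ¬ HFinite H (X ∩ Y) ∧ ¬ HFinite H (X ∩ Yᶜ) ∧ ¬ HFinite H (Xᶜ ∩ Y) ∧ ¬ HFinite H (Xᶜ ∩ Yᶜ)

/-- The coboundary `∂Y` of `Y` with respect to a finite generating set `S`. -/
def bdry (S : Finset G) (Y : Set G) : Set G :=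
  {g : G | ∃ s ∈ (S : Set G) ∪ (S : Set G)⁻¹, (g ∈ Y) ≠ (g * s ∈ Y)}

/-- `Y` crosses the `H`-almost invariant set `X` strongly: neither `∂Y ∩ X` nor
`∂Y ∩ X*` is `H`-finite. -/
def CrossesStrongly (S : Finset G) (H : Subgroup G) (X Y : Set G) : Prop :=
  ¬ HFinite H (bdry S Y ∩ X) ∧ ¬ HFinite H (bdry S Y ∩ Xᶜ)

/-- Two subsets of `G` are nested if one of the four corner sets is empty. -/
def Nested (U V : Set G) : Prop :=
  U ∩ V = ∅ ∨ U ∩ Vᶜ = ∅ ∨ Uᶜ ∩ V = ∅ ∨ Uᶜ ∩ Vᶜ = ∅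

/-- The conjugate subgroup `gHg⁻¹`. -/
def conjSub (g : G) (H : Subgroup G) : Subgroup G :=
  Subgroup.map (MulAut.conj g).toMonoidHom H

/-- A subgroup is two-ended if it contains an infinite cyclic subgroup of finite index. -/
def TwoEnded (H : Subgroup G) : Prop :=
  ∃ z : G, z ∈ H ∧ ¬ IsOfFinOrder z ∧ (Subgroup.zpowers z).relIndex H ≠ 0

/-- `G` is one-ended: `G` is infinite and every almost invariant subset of `G` (over the
trivial group) is finite or cofinite. -/
def OneEnded (G : Type*) [Group G] : Prop :=
  Infinite G ∧ ∀ X : Set G,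
    (∀ g : G, (symmDiff X ((· * g) '' X)).Finite) → X.Finite ∨ Xᶜ.Finite

/-- `G` is finitely presented. -/
def FinitelyPresentedGroup (G : Type*) [Group G] : Prop :=
  ∃ (n : ℕ) (R : Finset (FreeGroup (Fin n))),
    Nonempty (G ≃* FreeGroup (Fin n) ⧸ Subgroup.normalClosure (R : Set (FreeGroup (Fin n))))

/-- `Q(H)`: the collection of subsets of `G` which are almost invariant over some subgroup
commensurable with `H`. -/
def QH (H : Subgroup G) : Set (Set G) :=
  {X : Set G | ∃ K : Subgroup G, Subgroup.Commensurable K H ∧ AlmostInv K X}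

/-- The Boolean algebra of subsets of `G` generated by a family `S` of subsets: the smallest
family containing `S` closed under complementation, finite intersections and finite unions. -/
inductive BoolGen (S : Set (Set G)) : Set G → Prop
  | basic {U : Set G} : U ∈ S → BoolGen S U
  | compl {U : Set G} : BoolGen S U → BoolGen S Uᶜ
  | inter {U V : Set G} : BoolGen S U → BoolGen S V → BoolGen S (U ∩ V)
  | union {U V : Set G} : BoolGen S U → BoolGen S V → BoolGen S (U ∪ V)

/-- A subgroup is virtually free abelian of rank `m` if it has a finite index subgroup
isomorphic to `ℤ^m`. -/
def VirtuallyFreeAbelian (H : Subgroup G) (m : ℕ) : Prop :=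
  ∃ K : Subgroup G, K ≤ H ∧ K.relIndex H ≠ 0 ∧ Nonempty (K ≃* Multiplicative (Fin m → ℤ))

/-- `X` is `n`-canonical with respect to abelian groups: no translate of `X` crosses a
nontrivial almost invariant set over a virtually free abelian subgroup of rank at most `n`. -/
def NCanonicalAb (n : ℕ) (X : Set G) : Prop :=
  ∀ (L : Subgroup G) (m : ℕ), m ≤ n → VirtuallyFreeAbelian L m →
    ∀ Z : Set G, AlmostInv L Z → ¬ HFinite L Z → ¬ HFinite L Zᶜ →
      ∀ g : G, ¬ Crosses L Z (leftTr g X)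

variable {ι : Type*}

/-- The set `E` of all translates of the sets `X i` and of their complements. -/
def Translates (X : ι → Set G) : Set (Set G) :=
  {U : Set G | ∃ (g : G) (i : ι), U = leftTr g (X i) ∨ U = (leftTr g (X i))ᶜ}

/-- `W` is small for the element `U` of `E`: `W` is finite over the group `gHᵢg⁻¹`
associated to `U`. -/
def SmallOver (H : ι → Subgroup G) (X : ι → Set G) (U W : Set G) : Prop :=
  ∃ (g : G) (i : ι), (U = leftTr g (X i) ∨ U = (leftTr g (X i))ᶜ) ∧
    HFinite (conjSub g (H i)) W

/-- The four corner sets `U^{(*)} ∩ V^{(*)}`, indexed by pairs of booleans. -/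
def corner (U V : Set G) (p : Bool × Bool) : Set G :=
  (cond p.1 U Uᶜ) ∩ (cond p.2 V Vᶜ)

/-- Condition (*): the family is in good position: whenever two of the four corner sets
of a pair of elements of `E` are small, one of the corner sets is empty. -/
def GoodPosition (H : ι → Subgroup G) (X : ι → Set G) : Prop :=
  ∀ U ∈ Translates X, ∀ V ∈ Translates X,
    ∀ p q : Bool × Bool, p ≠ q →
      SmallOver H X U (corner U V p) → SmallOver H X U (corner U V q) →
        ∃ r : Bool × Bool, corner U V r = ∅

/-- The relation `U ≤ V` on `E`: `U ∩ V*` is empty or is the only small corner set. -/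
def eLE (H : ι → Subgroup G) (X : ι → Set G) (U V : Set G) : Prop :=
  U ∩ Vᶜ = ∅ ∨
    (SmallOver H X U (U ∩ Vᶜ) ∧
      ∀ p : Bool × Bool, p ≠ (true, false) → ¬ SmallOver H X U (corner U V p))

/-- The relation `U < V` on `E`. -/
def eLT (H : ι → Subgroup G) (X : ι → Set G) (U V : Set G) : Prop :=
  eLE H X U V ∧ U ≠ V

/-- `V` crosses the element `U` of `E`: no corner set is small. -/
def CrossesE (H : ι → Subgroup G) (X : ι → Set G) (U V : Set G) : Prop :=
  ∀ p : Bool × Bool, ¬ SmallOver H X U (corner U V p)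

/-- `V` crosses the element `U` of `E` strongly. -/
def StronglyCrossesE (S : Finset G) (H : ι → Subgroup G) (X : ι → Set G) (U V : Set G) : Prop :=
  ∃ (g : G) (i : ι), (U = leftTr g (X i) ∨ U = (leftTr g (X i))ᶜ) ∧
    ¬ HFinite (conjSub g (H i)) (bdry S V ∩ U) ∧ ¬ HFinite (conjSub g (H i)) (bdry S V ∩ Uᶜ)

/-- The relation on `E` generating the cross-connected components of `Ē`: two elements are
related if they coincide, are complementary, or cross. -/
def ccRelSet (H : ι → Subgroup G) (X : ι → Set G) (U V : Set G) : Prop :=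
  U ∈ Translates X ∧ V ∈ Translates X ∧ (U = V ∨ U = Vᶜ ∨ CrossesE H X U V)

/-- `U` and `V` determine the same cross-connected component of `Ē`. -/
def SameCCC (H : ι → Subgroup G) (X : ι → Set G) (U V : Set G) : Prop :=
  Relation.EqvGen (ccRelSet H X) U V

/-- `V̄` lies between `Ū` and `W̄` in `Ē`: some representatives satisfy `u < v < w`. -/
def BetweenBar (H : ι → Subgroup G) (X : ι → Set G) (U V W : Set G) : Prop :=
  ∃ u v w : Set G, (u = U ∨ u = Uᶜ) ∧ (v = V ∨ v = Vᶜ) ∧ (w = W ∨ w = Wᶜ) ∧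
    eLT H X u v ∧ eLT H X v w

/-- The setoid on `E` whose classes are the cross-connected components of `Ē`. -/
def cccSetoid (H : ι → Subgroup G) (X : ι → Set G) :
    Setoid {U : Set G // U ∈ Translates X} where
  r u v := SameCCC H X u.1 v.1
  iseqv := by
    refine ⟨fun u => Relation.EqvGen.refl _, ?_, ?_⟩
    · exact fun h => Relation.EqvGen.symm _ _ h
    · exact fun h₁ h₂ => Relation.EqvGen.trans _ _ _ h₁ h₂

theorem leftTr_leftTr (g g' : G) (X : Set G) : leftTr g (leftTr g' X) = leftTr (g * g') X := by
  simp only [leftTr, Set.image_image, mul_assoc]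

theorem leftTr_compl (g : G) (X : Set G) : leftTr g Xᶜ = (leftTr g X)ᶜ :=
  Set.image_compl_eq (Group.mulLeft_bijective g)

/-- Left translation as a map from `E` to `E`. -/
def translateE (X : ι → Set G) (g : G) (u : {U : Set G // U ∈ Translates X}) :
    {U : Set G // U ∈ Translates X} :=
  ⟨leftTr g u.1, by
    obtain ⟨g', i, h | h⟩ := u.2
    · exact ⟨g * g', i, Or.inl (by rw [h, leftTr_leftTr])⟩
    · exact ⟨g * g', i, Or.inr (by rw [h, leftTr_compl, leftTr_leftTr])⟩⟩

/-- Betweenness for cross-connected components: `B` lies between the distinct components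
`A` and `C` if there are elements enclosed by them with `u < v < w`. -/
def BetweenCCC (H : ι → Subgroup G) (X : ι → Set G)
    (A B C : Quotient (cccSetoid H X)) : Prop :=
  A ≠ B ∧ B ≠ C ∧ A ≠ C ∧
    ∃ u v w : {U : Set G // U ∈ Translates X},
      Quotient.mk (cccSetoid H X) u = A ∧ Quotient.mk (cccSetoid H X) v = B ∧
        Quotient.mk (cccSetoid H X) w = C ∧
        eLT H X u.1 v.1 ∧ eLT H X v.1 w.1

/-- The half-tree `Y_s` determined by the oriented edge `s = (u,v)`: the vertices
reachable from the terminal vertex `v` after deleting the edge `{u,v}`. -/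
def halfTree {V : Type*} (T : SimpleGraph V) (u v : V) : Set V :=
  {w : V | (T.deleteEdges {s(u, v)}).Reachable v w}

/-- With respect to a base vertex `b`, the subset `Z_s` of `G` determined by the
oriented edge `s = (u,v)`. -/
def Zset {V : Type*} [MulAction G V] (T : SimpleGraph V) (b u v : V) : Set G :=
  {g : G | g • b ∈ halfTree T u v}

/-- The vertex `v` encloses the `H`-almost invariant set `A`: for every edge `s`
oriented towards `v`, either `A ∩ Z_s*` or `A* ∩ Z_s*` is `H`-finite. -/
def Encloses {V : Type*} [MulAction G V] (T : SimpleGraph V) (b : V) (H : Subgroup G)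
    (v : V) (A : Set G) : Prop :=
  ∀ u : V, T.Adj u v → HFinite H (A ∩ (Zset T b u v)ᶜ) ∨ HFinite H (Aᶜ ∩ (Zset T b u v)ᶜ)

end Defs

/-!
Everything rests on a transfer principle for smallness, after Scott: let `A` be `L`-invariant
and not `L`-finite, `B` be `K`-almost invariant, and `W ⊇ A ∩ B` be `L`-finite, say `W ⊆ L D`;
then `W ∩ B` is `K`-finite. Otherwise `W ∩ B` contains a point `w = l d` with `w F ⊆ B` for any
prescribed finite `F`; for `x ∈ A` the choice `F = D⁻¹ x` puts `l x` in `A ∩ B ⊆ L D`, so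
`A ⊆ L D`, a contradiction.

As `Z` does not cross `V`, some corner `V^(*) ∩ Z^(*)` is small. It cannot be `V ∩ Z` (nor
`V ∩ Z*`): then `U ∩ Z ⊆ (U ∩ V*) ∪ (V ∩ Z)` would be small, although `Z` crosses `U`. If it is
`V* ∩ Z`, transfer makes `Z ∩ V*` small over `Z`, and good position shows it is the only small
corner, since by the previous argument and the nontriviality of `V` no corner of `(Z, V)` is
empty; so `Z ≤ V`, and symmetrically for `Z*`. Finally `Z ≠ V ≠ Z*` because `U ∩ V*` is small.
-/

open scoped Pointwise

namespace HFinite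

variable {G : Type*} [Group G] {H : Subgroup G} {W W' : Set G}

theorem iff_subset_mul : HFinite H W ↔ ∃ F : Finset G, W ⊆ (H : Set G) * F := by
  simp only [HFinite, Finset.mem_coe.symm, Set.iUnion_mul_right_image]

theorem empty (H : Subgroup G) : HFinite H (∅ : Set G) :=
  ⟨∅, Set.empty_subset _⟩

theorem mono (hW : HFinite H W) (h : W' ⊆ W) : HFinite H W' :=
  let ⟨F, hF⟩ := hW
  ⟨F, h.trans hF⟩

theorem union (hW : HFinite H W) (hW' : HFinite H W') : HFinite H (W ∪ W') := by
  classical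
  obtain ⟨F, hF⟩ := hW
  obtain ⟨F', hF'⟩ := hW'
  refine ⟨F ∪ F', Set.union_subset (hF.trans ?_) (hF'.trans ?_)⟩ <;>
    exact Set.biUnion_subset_biUnion_left (by simp)

theorem biUnion {ι : Type*} (s : Finset ι) {f : ι → Set G}
    (hf : ∀ i ∈ s, HFinite H (f i)) : HFinite H (⋃ i ∈ s, f i) := by
  classical
  induction s using Finset.induction_on with
  | empty => simpa using empty H
  | insert i s _ ih =>
    rw [Finset.set_biUnion_insert]
    exact (hf i (by simp)).union (ih fun j hj => hf j (by simp [hj]))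

end HFinite

section Transfer

variable {G : Type*} [Group G] {H K L : Subgroup G} {A B W : Set G}

theorem mem_conjSub {g x : G} : x ∈ conjSub g H ↔ ∃ h ∈ H, g * h * g⁻¹ = x := by
  simp [conjSub, Subgroup.mem_map]

theorem conjSub_inv_conjSub (g : G) (H : Subgroup G) : conjSub g⁻¹ (conjSub g H) = H := by
  ext x
  simp only [mem_conjSub]
  constructor
  · rintro ⟨_, ⟨h, hh, rfl⟩, rfl⟩
    simpa [mul_assoc] using hh
  · intro hx
    exact ⟨g * x * g⁻¹, ⟨x, hx, rfl⟩, by group⟩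

theorem leftTr_one (X : Set G) : leftTr 1 X = X := by
  simp [leftTr]

theorem HFinite.leftTr_conjSub (g : G) (hW : HFinite H W) :
    HFinite (conjSub g H) (leftTr g W) := by
  classical
  obtain ⟨F, hF⟩ := HFinite.iff_subset_mul.1 hW
  refine HFinite.iff_subset_mul.2 ⟨F.image (g * ·), ?_⟩
  rintro _ ⟨_, hw, rfl⟩
  obtain ⟨h, hh, f, hf, rfl⟩ := hF hw
  exact ⟨g * h * g⁻¹, mem_conjSub.2 ⟨h, hh, rfl⟩, g * f, by simpa using hf, by group⟩

theorem hFinite_conjSub_leftTr_iff (g : G) :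
    HFinite (conjSub g H) (leftTr g W) ↔ HFinite H W := by
  refine ⟨fun h => ?_, HFinite.leftTr_conjSub g⟩
  simpa [conjSub_inv_conjSub, leftTr_leftTr, leftTr_one] using h.leftTr_conjSub g⁻¹

theorem mem_of_leftTr_eq {h x : G} (hA : leftTr h A = A) (hx : x ∈ A) : h * x ∈ A :=
  hA ▸ ⟨x, hx, rfl⟩

theorem exists_forall_mul_mem
    (hB : ∀ g, HFinite K (symmDiff B ((· * g) '' B))) (hW : ¬ HFinite K W) (hWB : W ⊆ B)
    (F : Finset G) : ∃ w ∈ W, ∀ f ∈ F, w * f ∈ B := by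
  by_contra! hbad
  refine hW ((HFinite.biUnion F fun f _ => hB f⁻¹).mono fun w hw => ?_)
  obtain ⟨f, hf, hwf⟩ := hbad w hw
  refine Set.mem_biUnion hf (Or.inl ⟨hWB hw, ?_⟩)
  rintro ⟨b, hb, rfl⟩
  exact hwf (by simpa using hb)

theorem HFinite.transfer (hA : ∀ h ∈ L, leftTr h A = A) (hA' : ¬ HFinite L A)
    (hB : ∀ g, HFinite K (symmDiff B ((· * g) '' B))) (hW : HFinite L W) (hAB : A ∩ B ⊆ W) :
    HFinite K (W ∩ B) := by
  classical
  obtain ⟨D, hD⟩ := HFinite.iff_subset_mul.1 hW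
  by_contra hK
  refine hA' (HFinite.iff_subset_mul.2 ⟨D, fun x hx => ?_⟩)
  obtain ⟨w, ⟨hwW, -⟩, hw⟩ :=
    exists_forall_mul_mem hB hK Set.inter_subset_right (D.image (·⁻¹ * x))
  obtain ⟨l, hl, d, hd, rfl⟩ := hD hwW
  have hlx : l * x ∈ A ∩ B :=
    ⟨mem_of_leftTr_eq (hA l hl) hx,
      by simpa [mul_assoc] using hw (d⁻¹ * x) (Finset.mem_image_of_mem _ hd)⟩
  obtain ⟨l', hl', d', hd', he⟩ := hD (hAB hlx)
  refine ⟨l⁻¹ * l', mul_mem (inv_mem hl) hl', d', hd', ?_⟩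
  simp only at he ⊢
  rw [mul_assoc, he, inv_mul_cancel_left]

theorem HFinite.transfer_inter (hA : ∀ h ∈ L, leftTr h A = A) (hA' : ¬ HFinite L A)
    (hB : ∀ g, HFinite K (symmDiff B ((· * g) '' B))) (hAB : HFinite L (A ∩ B)) :
    HFinite K (A ∩ B) := by
  simpa [Set.inter_assoc] using hAB.transfer hA hA' hB subset_rfl

end Transfer

section AlmostInv

variable {G : Type*} [Group G] {H : Subgroup G} {X : Set G}

theorem AlmostInv.compl (h : AlmostInv H X) : AlmostInv H Xᶜ := by
  refine ⟨fun k hk => by rw [leftTr_compl, h.1 k hk], fun g => ?_⟩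
  rw [Set.image_compl_eq (Group.mulRight_bijective g), compl_symmDiff_compl]
  exact h.2 g

theorem AlmostInv.leftTr (g : G) (h : AlmostInv H X) :
    AlmostInv (conjSub g H) (leftTr g X) := by
  refine ⟨fun k hk => ?_, fun t => ?_⟩
  · obtain ⟨l, hl, rfl⟩ := mem_conjSub.1 hk
    rw [leftTr_leftTr, inv_mul_cancel_right, ← leftTr_leftTr, h.1 l hl]
  · have hcomm : (· * t) '' _root_.leftTr g X = _root_.leftTr g ((· * t) '' X) := by
      simp only [_root_.leftTr, Set.image_image, mul_assoc]
    rw [hcomm, _root_.leftTr, _root_.leftTr, ← Set.image_symmDiff (mul_right_injective g)]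
    exact (h.2 t).leftTr_conjSub g

theorem NontrivialAI.compl (h : NontrivialAI H X) : NontrivialAI H Xᶜ :=
  ⟨h.1.compl, h.2.2, by rw [compl_compl]; exact h.2.1⟩

theorem NontrivialAI.leftTr (g : G) (h : NontrivialAI H X) :
    NontrivialAI (conjSub g H) (leftTr g X) := by
  refine ⟨h.1.leftTr g, fun hf => h.2.1 ?_, fun hf => h.2.2 ?_⟩
  · exact (hFinite_conjSub_leftTr_iff g).1 hf
  · rw [← leftTr_compl] at hf
    exact (hFinite_conjSub_leftTr_iff g).1 hf

end AlmostInv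

section Translates

variable {G : Type*} [Group G] {ι : Type*} {H : ι → Subgroup G} {X : ι → Set G}
  {U V Y : Set G}

theorem nontrivialAI_of_eq_translate (hnt : ∀ i, NontrivialAI (H i) (X i)) {g : G} {i : ι}
    (h : U = leftTr g (X i) ∨ U = (leftTr g (X i))ᶜ) : NontrivialAI (conjSub g (H i)) U := by
  rcases h with rfl | rfl
  exacts [(hnt i).leftTr g, ((hnt i).leftTr g).compl]

theorem compl_mem_translates (hU : U ∈ Translates X) : Uᶜ ∈ Translates X := by
  obtain ⟨g, i, rfl | rfl⟩ := hU
  exacts [⟨g, i, Or.inr rfl⟩, ⟨g, i, Or.inl (compl_compl _)⟩]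

theorem smallOver_inter_compl_of_eLE (hU : U ∈ Translates X) (h : eLE H X U V) :
    SmallOver H X U (U ∩ Vᶜ) := by
  rcases h with he | ⟨hs, -⟩
  · obtain ⟨g, i, hrep⟩ := hU
    exact ⟨g, i, hrep, he ▸ HFinite.empty _⟩
  · exact hs

theorem CrossesE.compl (h : CrossesE H X U Y) : CrossesE H X U Yᶜ := by
  rintro ⟨a, _ | _⟩
  · simpa [corner] using h (a, true)
  · simpa [corner] using h (a, false)

theorem CrossesE.ne (hs : SmallOver H X U (U ∩ Vᶜ)) (h : CrossesE H X U Y) : Y ≠ V := by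
  rintro rfl
  exact h (true, false) hs

theorem not_smallOver_inter_of_crossesE (hnt : ∀ i, NontrivialAI (H i) (X i))
    (hY : Y ∈ Translates X) (hs : SmallOver H X U (U ∩ Vᶜ)) (hYU : CrossesE H X U Y) :
    ¬ SmallOver H X V (V ∩ Y) := by
  rintro ⟨gV, iV, hrepV, hVY⟩
  obtain ⟨gU, iU, hrepU, hUV⟩ := hs
  obtain ⟨gY, iY, hrepY⟩ := hY
  have nU := nontrivialAI_of_eq_translate hnt hrepU
  have nV := nontrivialAI_of_eq_translate hnt hrepV
  have nY := nontrivialAI_of_eq_translate hnt hrepY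
  have hUV' : HFinite (conjSub gV (H iV)) (U ∩ Vᶜ) :=
    hUV.transfer_inter nU.1.1 nU.2.1 nV.compl.1.2
  have hYU' : HFinite (conjSub gY (H iY)) (Y ∩ U) := by
    refine ((hUV'.union hVY).transfer nV.1.1 nV.2.1 nY.1.2 Set.subset_union_right).mono ?_
    rintro x ⟨hxY, hxU⟩
    by_cases hxV : x ∈ V
    exacts [⟨Or.inr ⟨hxV, hxY⟩, hxY⟩, ⟨Or.inl ⟨hxU, hxV⟩, hxY⟩]
  refine hYU (true, true) ⟨gU, iU, hrepU, ?_⟩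
  rw [corner, cond_true, cond_true, Set.inter_comm]
  exact hYU'.transfer_inter nY.1.1 nY.2.1 nU.1.2

theorem eLE_of_smallOver_compl_inter (hnt : ∀ i, NontrivialAI (H i) (X i))
    (hgood : GoodPosition H X) (hV : V ∈ Translates X) (hY : Y ∈ Translates X)
    (hs : SmallOver H X U (U ∩ Vᶜ)) (hYU : CrossesE H X U Y)
    (h : SmallOver H X V (Vᶜ ∩ Y)) : eLE H X Y V := by
  obtain ⟨gV, iV, hrepV, hVY⟩ := h
  obtain ⟨gY, iY, hrepY⟩ := id hY
  have nV := nontrivialAI_of_eq_translate hnt hrepV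
  have nY := nontrivialAI_of_eq_translate hnt hrepY
  have hYV : SmallOver H X Y (corner Y V (true, false)) := ⟨gY, iY, hrepY, by
    rw [corner, cond_true, cond_false, Set.inter_comm]
    exact hVY.transfer_inter nV.compl.1.1 nV.compl.2.1 nY.1.2⟩
  by_cases he : Y ∩ Vᶜ = ∅
  · exact Or.inl he
  refine Or.inr ⟨hYV, fun p hp hpV => ?_⟩
  have hmeets : ∀ W ∈ Translates X, CrossesE H X U W → V ∩ W ≠ ∅ := fun W hW hWU hVW =>
    not_smallOver_inter_of_crossesE hnt hW hs hWU ⟨gV, iV, hrepV, hVW ▸ HFinite.empty _⟩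
  obtain ⟨⟨_ | _, _ | _⟩, hr⟩ := hgood Y hY V hV p (true, false) hp hpV hYV
  · refine nV.2.2 (hVY.mono fun x hx => ⟨hx, ?_⟩)
    by_contra hxY
    exact hr.subset ⟨hxY, hx⟩
  · exact hmeets _ (compl_mem_translates hY) hYU.compl
      (by simpa [corner, Set.inter_comm] using hr)
  · exact he hr
  · exact hmeets _ hY hYU (by simpa [corner, Set.inter_comm] using hr)

end Translates

theorem stmt6_general {G : Type*} [Group G] {n : ℕ}
    (H : Fin n → Subgroup G) (X : Fin n → Set G)
    (hnt : ∀ i, NontrivialAI (H i) (X i))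
    (hgood : GoodPosition H X)
    (U V Z : Set G) (hU : U ∈ Translates X) (hV : V ∈ Translates X) (hZ : Z ∈ Translates X)
    (hUV : eLE H X U V) (hZU : CrossesE H X U Z) (hZV : ¬ CrossesE H X V Z) :
    (eLE H X Z V ∨ eLE H X Zᶜ V) ∧
    (eLT H X U V → eLT H X Z V ∨ eLT H X Zᶜ V) := by
  have hs := smallOver_inter_compl_of_eLE hU hUV
  have hZc := compl_mem_translates hZ
  have hle : eLE H X Z V ∨ eLE H X Zᶜ V := by
    obtain ⟨⟨_ | _, _ | _⟩, hp⟩ : ∃ p, SmallOver H X V (corner V Z p) := by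
      simpa only [CrossesE, not_forall_not] using hZV
    · exact .inr (eLE_of_smallOver_compl_inter hnt hgood hV hZc hs hZU.compl hp)
    · exact .inl (eLE_of_smallOver_compl_inter hnt hgood hV hZ hs hZU hp)
    · exact (not_smallOver_inter_of_crossesE hnt hZc hs hZU.compl hp).elim
    · exact (not_smallOver_inter_of_crossesE hnt hZ hs hZU hp).elim
  exact ⟨hle, fun _ => hle.imp (⟨·, hZU.ne hs⟩) (⟨·, hZU.compl.ne hs⟩)⟩

/-- If `U ≤ V`, `Z` crosses `U`, and `Z` does not cross `V`, then
`Z ≤ V` or `Z* ≤ V`; if moreover `U < V`, then `Z < V` or `Z* < V`. -/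
theorem stmt6 {G : Type*} [Group G] (hGfg : Group.FG G) {n : ℕ}
    (H : Fin n → Subgroup G) (X : Fin n → Set G)
    (hHfg : ∀ i, (H i).FG) (hnt : ∀ i, NontrivialAI (H i) (X i))
    (hgood : GoodPosition H X)
    (U V Z : Set G) (hU : U ∈ Translates X) (hV : V ∈ Translates X) (hZ : Z ∈ Translates X)
    (hUV : eLE H X U V) (hZU : CrossesE H X U Z) (hZV : ¬ CrossesE H X V Z) :
    (eLE H X Z V ∨ eLE H X Zᶜ V) ∧
    (eLT H X U V → eLT H X Z V ∨ eLT H X Zᶜ V) :=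
  stmt6_general H X hnt hgood U V Z hU hV hZ hUV hZU hZV
end

section
/- Let G be a group acting without inversions on a tree T, transitively on the unoriented edges of T, and with no vertex of T fixed by all of G (so the action corresponds to a splitting of G over the stabiliser of an edge). Let s = (u,v) be an oriented edge of T and let X = {g ∈ G : g·v ∈ Y_s}. Then either there is an element g ∈ G with gX ⊆ X* (i.e. gX ∩ X = ∅), or the stabiliser of the edge s equals the stabiliser of one of its endpoints and u and v lie in the same G-orbit (the splitting is an ascending HNN extension). -/
/-!
If some element `a` fixes `u` but moves `v`, then `a • v` is a second neighbour of `u`, and the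
half-trees `Y_(u,v)` and `Y_(u,a•v)` are disjoint; as `a` carries `Y_(u,v)` into `Y_(u,a•v)`,
the translate `aX` misses `X`. Otherwise `Stab(u) ≤ Stab(v)`. If moreover `u` and `v` lie in
different orbits, edge-transitivity makes `v` the only neighbour of `u` and makes every
neighbour of `v` a translate of `u`, so `T` is a star centred at `v`; then `v` is the only vertex
in its orbit, i.e. a global fixed point.
-/

namespace SimpleGraph

variable {V : Type*} {T : SimpleGraph V} {u v v' w : V}

lemma IsAcyclic.notMem_halfTree (hT : T.IsAcyclic) (huv : T.Adj u v) : u ∉ halfTree T u v :=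
  fun h => isBridge_iff.mp (isAcyclic_iff_forall_adj_isBridge.mp hT huv) h.symm

lemma IsAcyclic.exists_isPath_of_mem_halfTree (hT : T.IsAcyclic) (huv : T.Adj u v)
    (hw : w ∈ halfTree T u v) : ∃ p : T.Walk v w, p.IsPath ∧ u ∉ p.support := by
  classical
  obtain ⟨p⟩ := hw
  let q := p.toPath
  refine ⟨q.1.mapLe (T.deleteEdges_le _), q.2.mapLe _, fun hu => ?_⟩
  rw [Walk.support_mapLe_eq_support] at hu
  exact hT.notMem_halfTree huv ⟨q.1.takeUntil u hu⟩

lemma IsAcyclic.disjoint_halfTree (hT : T.IsAcyclic) (huv : T.Adj u v) (huv' : T.Adj u v')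
    (hne : v ≠ v') : Disjoint (halfTree T u v) (halfTree T u v') := by
  refine Set.disjoint_left.mpr fun w hw hw' => hne ?_
  obtain ⟨p, hp, hup⟩ := hT.exists_isPath_of_mem_halfTree huv hw
  obtain ⟨p', hp', hup'⟩ := hT.exists_isPath_of_mem_halfTree huv' hw'
  have hpath : (⟨.cons huv p, hp.cons hup⟩ : T.Path u w) = ⟨.cons huv' p', hp'.cons hup'⟩ :=
    (hT.subsingleton_path u w).elim _ _
  simpa using congrArg (fun q : T.Path u w => q.1.snd) hpath

lemma Preconnected.eq_or_adj_of_forall_adj_adj (hT : T.Preconnected)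
    (h : ∀ w x, T.Adj v w → T.Adj w x → x = v) (x : V) : x = v ∨ T.Adj v x := by
  suffices ∀ {y z} (p : T.Walk y z), (y = v ∨ T.Adj v y) → z = v ∨ T.Adj v z from
    this (hT v x).some (.inl rfl)
  intro y z p
  induction p with
  | nil => exact id
  | cons hab _ ih =>
    rintro (rfl | hy)
    exacts [ih (.inr hab), ih (.inl (h _ _ hy hab))]

end SimpleGraph

section Action

variable {G V : Type*} [Group G] [MulAction G V] {T : SimpleGraph V} {u v w : V}

lemma smul_mem_halfTree (hadj : ∀ (g : G) (x y : V), T.Adj x y → T.Adj (g • x) (g • y))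
    (g : G) {x : V} (hx : x ∈ halfTree T u v) : g • x ∈ halfTree T (g • u) (g • v) := by
  refine hx.map (⟨(g • ·), fun {a b} hab => ?_⟩ :
    T.deleteEdges {s(u, v)} →g T.deleteEdges {s(g • u, g • v)})
  simp only [SimpleGraph.deleteEdges_adj, Set.mem_singleton_iff, Sym2.eq_iff,
    smul_left_cancel_iff] at hab ⊢
  exact ⟨hadj g a b hab.1, hab.2⟩

lemma leftTr_Zset_subset (hadj : ∀ (g : G) (x y : V), T.Adj x y → T.Adj (g • x) (g • y))
    (a : G) (b : V) : leftTr a (Zset T b u v) ⊆ Zset T b (a • u) (a • v) := by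
  rintro _ ⟨x, hx, rfl⟩
  show (a * x) • b ∈ halfTree T (a • u) (a • v)
  rw [mul_smul]
  exact smul_mem_halfTree hadj a hx

lemma leftTr_Zset_inter_Zset_eq_empty (hT : T.IsAcyclic)
    (hadj : ∀ (g : G) (x y : V), T.Adj x y → T.Adj (g • x) (g • y)) (huv : T.Adj u v)
    {a : G} (hau : a • u = u) (hav : a • v ≠ v) (b : V) :
    leftTr a (Zset T b u v) ∩ Zset T b u v = ∅ := by
  have hdisj : Disjoint (Zset (G := G) T b u (a • v)) (Zset T b u v) :=
    (hT.disjoint_halfTree (hau ▸ hadj a u v huv) huv hav).preimage _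
  rw [← Set.disjoint_iff_inter_eq_empty]
  exact hdisj.mono_left ((leftTr_Zset_subset hadj a b).trans_eq (by rw [hau]))

lemma eq_of_adj_of_stabilizer_le
    (htrans : ∀ a b c d : V, T.Adj a b → T.Adj c d →
      ∃ g : G, (g • a = c ∧ g • b = d) ∨ (g • a = d ∧ g • b = c))
    (huv : T.Adj u v) (hstab : MulAction.stabilizer G u ≤ MulAction.stabilizer G v)
    (horb : ∀ g : G, g • u ≠ v) (huw : T.Adj u w) : w = v := by
  obtain ⟨g, ⟨hgu, rfl⟩ | ⟨-, hgv⟩⟩ := htrans u v u w huv huw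
  · exact hstab hgu
  · exact absurd (by rw [← hgv, inv_smul_smul]) (horb g⁻¹)

lemma exists_smul_eq_of_adj
    (htrans : ∀ a b c d : V, T.Adj a b → T.Adj c d →
      ∃ g : G, (g • a = c ∧ g • b = d) ∨ (g • a = d ∧ g • b = c))
    (huv : T.Adj u v) (horb : ∀ g : G, g • u ≠ v) (hvw : T.Adj v w) :
    ∃ h : G, h • v = v ∧ h • u = w := by
  obtain ⟨h, ⟨hhu, -⟩ | ⟨hhu, hhv⟩⟩ := htrans u v v w huv hvw
  · exact absurd hhu (horb h)
  · exact ⟨h, hhv, hhu⟩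

lemma smul_eq_self_of_stabilizer_le
    (htrans : ∀ a b c d : V, T.Adj a b → T.Adj c d →
      ∃ g : G, (g • a = c ∧ g • b = d) ∨ (g • a = d ∧ g • b = c))
    (hT : T.Preconnected)
    (hadj : ∀ (g : G) (x y : V), T.Adj x y → T.Adj (g • x) (g • y)) (huv : T.Adj u v)
    (hstab : MulAction.stabilizer G u ≤ MulAction.stabilizer G v)
    (horb : ∀ g : G, g • u ≠ v) (g : G) :
    g • v = v := by
  have hstar : ∀ w x, T.Adj v w → T.Adj w x → x = v := by
    intro w x hvw hwx
    obtain ⟨h, hhv, rfl⟩ := exists_smul_eq_of_adj htrans huv horb hvw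
    have hx : h⁻¹ • x = v :=
      eq_of_adj_of_stabilizer_le htrans huv hstab horb (by simpa using hadj h⁻¹ _ _ hwx)
    rw [← hhv, ← hx, smul_inv_smul]
  rcases hT.eq_or_adj_of_forall_adj_adj hstar (g • v) with hgv | hgv
  · exact hgv
  · obtain ⟨k, -, hk⟩ := exists_smul_eq_of_adj htrans huv horb hgv
    exact absurd (by rw [mul_smul, hk, inv_smul_smul]) (horb (g⁻¹ * k))

end Action

theorem stmt11_general {G V : Type*} [Group G] [MulAction G V] (T : SimpleGraph V)
    (htree : T.IsTree)
    (hadj : ∀ (g : G) (x y : V), T.Adj x y → T.Adj (g • x) (g • y))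
    (htrans : ∀ a b c d : V, T.Adj a b → T.Adj c d →
      ∃ g : G, (g • a = c ∧ g • b = d) ∨ (g • a = d ∧ g • b = c))
    (hnofix : ∀ w : V, ∃ g : G, g • w ≠ w)
    (u v : V) (he : T.Adj u v) :
    (∃ g : G, leftTr g (Zset T v u v) ∩ Zset T v u v = ∅) ∨
    ((MulAction.stabilizer G u ⊓ MulAction.stabilizer G v = MulAction.stabilizer G u ∨
        MulAction.stabilizer G u ⊓ MulAction.stabilizer G v = MulAction.stabilizer G v) ∧
      ∃ g : G, g • u = v) := by
  by_cases hmove : ∃ a : G, a • u = u ∧ a • v ≠ v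
  · obtain ⟨a, hau, hav⟩ := hmove
    exact .inl ⟨a, leftTr_Zset_inter_Zset_eq_empty htree.isAcyclic hadj he hau hav v⟩
  push Not at hmove
  by_cases horb : ∃ g : G, g • u = v
  · exact .inr ⟨.inl (inf_eq_left.mpr hmove), horb⟩
  push Not at horb
  obtain ⟨g, hg⟩ := hnofix v
  exact absurd (smul_eq_self_of_stabilizer_le htrans htree.connected.preconnected hadj he hmove
    horb g) hg

/-- For a splitting of `G` (a `G`-tree with edge-transitive action and no
global fixed vertex) with oriented edge `s = (u,v)` and associated set
`X = {g | g·v ∈ Y_s}`, either some translate `gX` is contained in `X*`, or the splitting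
is an ascending HNN extension: the stabiliser of `s` equals the stabiliser of one of its
endpoints and `u`, `v` lie in the same `G`-orbit. -/
theorem stmt11 {G V : Type*} [Group G] [MulAction G V] (T : SimpleGraph V)
    (htree : T.IsTree)
    (hadj : ∀ (g : G) (x y : V), T.Adj x y → T.Adj (g • x) (g • y))
    (hinv : ∀ (g : G) (x y : V), T.Adj x y → ¬(g • x = y ∧ g • y = x))
    (htrans : ∀ a b c d : V, T.Adj a b → T.Adj c d →
      ∃ g : G, (g • a = c ∧ g • b = d) ∨ (g • a = d ∧ g • b = c))
    (hnofix : ∀ w : V, ∃ g : G, g • w ≠ w)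
    (u v : V) (he : T.Adj u v) :
    (∃ g : G, leftTr g (Zset T v u v) ∩ Zset T v u v = ∅) ∨
    ((MulAction.stabilizer G u ⊓ MulAction.stabilizer G v = MulAction.stabilizer G u ∨
        MulAction.stabilizer G u ⊓ MulAction.stabilizer G v = MulAction.stabilizer G v) ∧
      ∃ g : G, g • u = v) :=
  stmt11_general T htree hadj htrans hnofix u v he
end
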